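/- Fix integers r ≥ 2, m ≥ 1, and 1 ≤ t ≤ 2^m − 1, and let C be a binary linear code with coordinates indexed by Ω_t^{(m)} whose codewords satisfy x_α = Σ_{β∈L(α)} x_β for all α ∈ Ω_t^{(m)}\Ω_0^{(m)}. Then for every nonempty subset E ⊆ Ω_t^{(m)}\Ω_0^{(m)}, there exists α ∈ E having a recovering set R ⊆ Ω_t^{(m)} \ E of size at most r. -/

import Mathlib

open Finset

/-- `supp_m(s)`: the support of the `m`-digit binary representation of `s`,
with digit `ℓ` (0-indexed) corresponding to `2^ℓ`. -/
def suppm (m s : ℕ) : Finset (Fin m) :=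
  Finset.univ.filter (fun ℓ => s.testBit ℓ.val)

/-- `U(α) = {ℓ ∈ [m] : α_ℓ = r}`, for `α ∈ Z_{r+1}^m`. -/
def Uset (r m : ℕ) (α : Fin m → Fin (r + 1)) : Finset (Fin m) :=
  Finset.univ.filter (fun ℓ => (α ℓ : ℕ) = r)

/-- `L(α) = {β ∈ Z_r^m : β_ℓ = α_ℓ for all ℓ with α_ℓ < r}`, with
`Z_r ⊆ Z_{r+1}` viewed as the elements of value `< r`. -/
def Lset (r m : ℕ) (α : Fin m → Fin (r + 1)) : Finset (Fin m → Fin (r + 1)) :=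
  Finset.univ.filter (fun β =>
    (∀ ℓ, (β ℓ : ℕ) < r) ∧ ∀ ℓ, (α ℓ : ℕ) < r → β ℓ = α ℓ)

/-- `Γ_s = {α ∈ Z_{r+1}^m : U(α) = supp_m(s)}`. -/
def Gam (r m s : ℕ) : Finset (Fin m → Fin (r + 1)) :=
  Finset.univ.filter (fun α => Uset r m α = suppm m s)

/-- `Ω_t^{(m)} = ⋃_{s=0}^{t} Γ_s`. -/
def Omeg (r m t : ℕ) : Finset (Fin m → Fin (r + 1)) :=
  (Finset.range (t + 1)).biUnion (Gam r m)

/-- The coordinate index set `Ω_t^{(m)}` as a type. -/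
abbrev OmegIdx (r m t : ℕ) : Type := {α : Fin m → Fin (r + 1) // α ∈ Omeg r m t}

/-- The columns of the row of `H_t^{(m)}` indexed by `α`, other than `α` itself:
the coordinates in `Ω_t^{(m)}` whose index lies in `L(α)`. -/
def LIdx (r m t : ℕ) (α : Fin m → Fin (r + 1)) : Finset (OmegIdx r m t) :=
  Finset.univ.filter (fun β => β.1 ∈ Lset r m α)

/-!
Take `α ∈ E` lying in `Γ_s` with `s` minimal, and a coordinate `ℓ` with `α_ℓ = r` (one exists
since `α ∉ Ω_0`). Replacing `α_ℓ` by `j` for each `j < r` gives `r` indices lying in `Γ_{s'}`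
with `s' = s - 2^ℓ < s`, hence in `Ω_t` but not in `E`. Their sets `L` partition `L(α)`
according to the value at `ℓ`, so the sum of their parity checks is the parity check of `α`;
on `Ω_0` the check `x_γ = ∑_{β ∈ L(γ)} x_β` is trivial because `L(γ) = {γ}`.
-/

theorem Nat.testBit_sum_two_pow (T : Finset ℕ) (i : ℕ) :
    (∑ j ∈ T, 2 ^ j).testBit i ↔ i ∈ T := by
  rw [← Nat.mem_bitIndices, ← List.mem_toFinset, Finset.toFinset_bitIndices_sum_two_pow]

theorem sum_two_pow_eq_sum_map_val {m : ℕ} (S : Finset (Fin m)) :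
    ∑ ℓ ∈ S, 2 ^ (ℓ : ℕ) = ∑ i ∈ S.map Fin.valEmbedding, 2 ^ i := by
  rw [sum_map]
  rfl

theorem suppm_sum_two_pow {m : ℕ} (S : Finset (Fin m)) :
    suppm m (∑ ℓ ∈ S, 2 ^ (ℓ : ℕ)) = S := by
  ext ℓ
  rw [suppm, mem_filter, sum_two_pow_eq_sum_map_val, Nat.testBit_sum_two_pow]
  simp [Fin.val_inj]

theorem sum_two_pow_suppm_le (m s : ℕ) : ∑ ℓ ∈ suppm m s, 2 ^ (ℓ : ℕ) ≤ s :=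
  calc ∑ ℓ ∈ suppm m s, 2 ^ (ℓ : ℕ)
      = ∑ i ∈ (suppm m s).map Fin.valEmbedding, 2 ^ i := sum_two_pow_eq_sum_map_val _
    _ ≤ ∑ i ∈ s.bitIndices.toFinset, 2 ^ i :=
        sum_le_sum_of_subset fun i => by
          simp only [mem_map, suppm, mem_filter, mem_univ, true_and, List.mem_toFinset,
            Nat.mem_bitIndices]
          rintro ⟨ℓ, hℓ, rfl⟩
          exact hℓ
    _ = s := Finset.sum_toFinset_bitIndices_two_pow s

section Index

variable {r m : ℕ}

/-- The number whose binary support is `U(α)`, i.e. the `s` with `α ∈ Γ_s`. -/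
def gammaIndex (α : Fin m → Fin (r + 1)) : ℕ :=
  ∑ ℓ ∈ Uset r m α, 2 ^ (ℓ : ℕ)

theorem mem_Uset {α : Fin m → Fin (r + 1)} {ℓ : Fin m} :
    ℓ ∈ Uset r m α ↔ (α ℓ : ℕ) = r := by
  simp [Uset]

theorem mem_Omeg_iff {t : ℕ} {α : Fin m → Fin (r + 1)} :
    α ∈ Omeg r m t ↔ gammaIndex α ≤ t := by
  simp only [Omeg, Gam, mem_biUnion, mem_range, mem_filter, mem_univ, true_and]
  constructor
  · rintro ⟨s, hs, hα⟩
    exact (hα ▸ sum_two_pow_suppm_le m s).trans (Nat.lt_succ_iff.1 hs)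
  · exact fun h => ⟨gammaIndex α, Nat.lt_succ_of_le h, (suppm_sum_two_pow _).symm⟩

theorem mem_Omeg_zero_iff {α : Fin m → Fin (r + 1)} :
    α ∈ Omeg r m 0 ↔ ∀ ℓ, (α ℓ : ℕ) < r := by
  simp only [mem_Omeg_iff, Nat.le_zero, gammaIndex, sum_eq_zero_iff, pow_eq_zero_iff',
    Uset, mem_filter, mem_univ, true_and]
  exact forall_congr' fun ℓ => by grind

theorem nonempty_Uset_of_notMem_Omeg_zero {α : Fin m → Fin (r + 1)}
    (hα : α ∉ Omeg r m 0) : (Uset r m α).Nonempty := by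
  simp only [mem_Omeg_zero_iff, not_forall, not_lt] at hα
  obtain ⟨ℓ, hℓ⟩ := hα
  exact ⟨ℓ, mem_Uset.2 (by have := (α ℓ).isLt; omega)⟩

theorem Uset_update_castSucc (α : Fin m → Fin (r + 1)) (ℓ : Fin m) (j : Fin r) :
    Uset r m (Function.update α ℓ j.castSucc) = (Uset r m α).erase ℓ := by
  ext k
  rcases eq_or_ne k ℓ with rfl | hk
  · simp [Uset, j.isLt.ne]
  · simp [Uset, hk]

theorem gammaIndex_update_castSucc_lt {α : Fin m → Fin (r + 1)} {ℓ : Fin m}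
    (hℓ : ℓ ∈ Uset r m α) (j : Fin r) :
    gammaIndex (Function.update α ℓ j.castSucc) < gammaIndex α := by
  rw [gammaIndex, Uset_update_castSucc]
  exact sum_erase_lt_of_pos hℓ (Nat.two_pow_pos _)

theorem mem_Lset_update_castSucc {α : Fin m → Fin (r + 1)} {ℓ : Fin m}
    (hℓ : (α ℓ : ℕ) = r) (j : Fin r) (β : Fin m → Fin (r + 1)) :
    β ∈ Lset r m (Function.update α ℓ j.castSucc) ↔ β ∈ Lset r m α ∧ β ℓ = j.castSucc := by
  simp only [Lset, mem_filter, mem_univ, true_and]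
  constructor
  · rintro ⟨hβ, hagree⟩
    have hβℓ : β ℓ = j.castSucc := by simpa using hagree ℓ (by simp)
    refine ⟨⟨hβ, fun k hk => ?_⟩, hβℓ⟩
    have hkℓ : k ≠ ℓ := by rintro rfl; omega
    simpa [hkℓ] using hagree k (by simpa [hkℓ] using hk)
  · rintro ⟨⟨hβ, hagree⟩, hβℓ⟩
    refine ⟨hβ, fun k hk => ?_⟩
    rcases eq_or_ne k ℓ with rfl | hkℓ
    · simpa using hβℓ
    · simp only [Function.update_of_ne hkℓ] at hk ⊢
      exact hagree k hk

end Index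

section Coordinates

variable {r m t : ℕ}

def OmegIdx.lower (α : OmegIdx r m t) {ℓ : Fin m} (hℓ : ℓ ∈ Uset r m α.1) (j : Fin r) :
    OmegIdx r m t :=
  ⟨Function.update α.1 ℓ j.castSucc,
    mem_Omeg_iff.2 ((gammaIndex_update_castSucc_lt hℓ j).le.trans (mem_Omeg_iff.1 α.2))⟩

theorem OmegIdx.lower_apply_self (α : OmegIdx r m t) {ℓ : Fin m} (hℓ : ℓ ∈ Uset r m α.1)
    (j : Fin r) : (α.lower hℓ j).1 ℓ = j.castSucc :=
  Function.update_self ℓ _ _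

theorem OmegIdx.lower_injective (α : OmegIdx r m t) {ℓ : Fin m} (hℓ : ℓ ∈ Uset r m α.1) :
    Function.Injective (α.lower hℓ) := fun i j hij =>
  Fin.castSucc_injective r <| by
    rw [← α.lower_apply_self hℓ i, ← α.lower_apply_self hℓ j, hij]

theorem OmegIdx.lower_ne (α : OmegIdx r m t) {ℓ : Fin m} (hℓ : ℓ ∈ Uset r m α.1)
    (j : Fin r) : α.lower hℓ j ≠ α := by
  intro h
  have hαℓ := mem_Uset.1 hℓ
  have := congrArg (fun γ : OmegIdx r m t => (γ.1 ℓ : ℕ)) h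
  simp only [α.lower_apply_self hℓ j, Fin.val_castSucc] at this
  omega

theorem OmegIdx.gammaIndex_lower_lt (α : OmegIdx r m t) {ℓ : Fin m}
    (hℓ : ℓ ∈ Uset r m α.1) (j : Fin r) : gammaIndex (α.lower hℓ j).1 < gammaIndex α.1 :=
  gammaIndex_update_castSucc_lt hℓ j

theorem LIdx_eq_singleton {γ : OmegIdx r m t} (hγ : γ.1 ∈ Omeg r m 0) :
    LIdx r m t γ.1 = {γ} := by
  rw [mem_Omeg_zero_iff] at hγ
  ext β
  simp only [LIdx, Lset, mem_filter, mem_univ, true_and, mem_singleton]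
  constructor
  · rintro ⟨-, hagree⟩
    exact Subtype.ext (funext fun k => hagree k (hγ k))
  · rintro rfl
    exact ⟨hγ, fun _ _ => rfl⟩

/-- `L(α)` is partitioned by the value at a coordinate `ℓ ∈ U(α)`. -/
theorem sum_LIdx_eq_sum_lower {M : Type*} [AddCommMonoid M] (f : OmegIdx r m t → M)
    (α : OmegIdx r m t) {ℓ : Fin m} (hℓ : ℓ ∈ Uset r m α.1) :
    ∑ β ∈ LIdx r m t α.1, f β = ∑ j : Fin r, ∑ β ∈ LIdx r m t (α.lower hℓ j).1, f β := by
  have hαℓ := mem_Uset.1 hℓ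
  have hmaps : ∀ β ∈ LIdx r m t α.1, β.1 ℓ ∈ univ.map Fin.castSuccEmb := by
    intro β hβ
    simp only [LIdx, Lset, mem_filter, mem_univ, true_and] at hβ
    simp only [mem_map, mem_univ, true_and]
    exact ⟨⟨_, hβ.1 ℓ⟩, rfl⟩
  rw [← sum_fiberwise_of_maps_to hmaps, sum_map]
  refine sum_congr rfl fun j _ => sum_congr ?_ fun _ _ => rfl
  ext β
  simp only [LIdx, mem_filter, mem_univ, true_and, OmegIdx.lower, mem_Lset_update_castSucc hαℓ]
  exact Iff.rfl

theorem eq_sum_LIdx_of_mem {C : Submodule (ZMod 2) (OmegIdx r m t → ZMod 2)}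
    (hC : ∀ x ∈ C, ∀ α : OmegIdx r m t, α.1 ∉ Omeg r m 0 →
      x α = ∑ β ∈ LIdx r m t α.1, x β)
    {x : OmegIdx r m t → ZMod 2} (hx : x ∈ C) (γ : OmegIdx r m t) :
    x γ = ∑ β ∈ LIdx r m t γ.1, x β := by
  by_cases hγ : γ.1 ∈ Omeg r m 0
  · rw [LIdx_eq_singleton hγ, sum_singleton]
  · exact hC x hx γ hγ

theorem eq_sum_lower {x : OmegIdx r m t → ZMod 2}
    (hx : ∀ γ : OmegIdx r m t, x γ = ∑ β ∈ LIdx r m t γ.1, x β)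
    (α : OmegIdx r m t) {ℓ : Fin m} (hℓ : ℓ ∈ Uset r m α.1) :
    x α = ∑ j : Fin r, x (α.lower hℓ j) :=
  calc x α = ∑ β ∈ LIdx r m t α.1, x β := hx α
    _ = ∑ j : Fin r, ∑ β ∈ LIdx r m t (α.lower hℓ j).1, x β := sum_LIdx_eq_sum_lower x α hℓ
    _ = ∑ j : Fin r, x (α.lower hℓ j) := sum_congr rfl fun _ _ => (hx _).symm

end Coordinates

theorem exists_recoverable_outside_info_general (r m t : ℕ)
    (C : Submodule (ZMod 2) (OmegIdx r m t → ZMod 2))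
    (hC : ∀ x ∈ C, ∀ α : OmegIdx r m t, α.1 ∉ Omeg r m 0 →
      x α = ∑ β ∈ LIdx r m t α.1, x β)
    (E : Finset (OmegIdx r m t)) (hEne : E.Nonempty)
    (hE : ∀ α ∈ E, α.1 ∉ Omeg r m 0) :
    ∃ α ∈ E, ∃ R : Finset (OmegIdx r m t),
      α ∉ R ∧ R.card ≤ r ∧ R ⊆ Eᶜ ∧ ∀ x ∈ C, x α = ∑ β ∈ R, x β := by
  obtain ⟨α, hαE, hmin⟩ := E.exists_min_image (fun β => gammaIndex β.1) hEne
  obtain ⟨ℓ, hℓ⟩ := nonempty_Uset_of_notMem_Omeg_zero (hE α hαE)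
  refine ⟨α, hαE, univ.image (α.lower hℓ), ?_, card_image_le.trans (by simp), ?_, ?_⟩
  · simpa using α.lower_ne hℓ
  · simp only [subset_iff, mem_image, mem_univ, true_and, mem_compl, forall_exists_index]
    rintro _ j rfl hjE
    exact (hmin _ hjE).not_gt (α.gammaIndex_lower_lt hℓ j)
  · intro x hx
    rw [sum_image fun i _ j _ h => α.lower_injective hℓ h]
    exact eq_sum_lower (eq_sum_LIdx_of_mem hC hx) α hℓ

/-- Lemma 8: if `C` is a binary linear code on the coordinates `Ω_t^{(m)}` whose
codewords satisfy `x_α = ∑_{β ∈ L(α)} x_β` for all `α ∈ Ω_t^{(m)} \ Ω_0^{(m)}`, then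
for every nonempty `E ⊆ Ω_t^{(m)} \ Ω_0^{(m)}` there is an `α ∈ E` having a recovering
set `R ⊆ Ω_t^{(m)} \ E` of size at most `r`. -/
theorem exists_recoverable_outside_info (r m t : ℕ) (hr : 2 ≤ r) (ht1 : 1 ≤ t)
    (ht2 : t ≤ 2 ^ m - 1)
    (C : Submodule (ZMod 2) (OmegIdx r m t → ZMod 2))
    (hC : ∀ x ∈ C, ∀ α : OmegIdx r m t, α.1 ∉ Omeg r m 0 →
      x α = ∑ β ∈ LIdx r m t α.1, x β)
    (E : Finset (OmegIdx r m t)) (hEne : E.Nonempty)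
    (hE : ∀ α ∈ E, α.1 ∉ Omeg r m 0) :
    ∃ α ∈ E, ∃ R : Finset (OmegIdx r m t),
      α ∉ R ∧ R.card ≤ r ∧ R ⊆ Eᶜ ∧ ∀ x ∈ C, x α = ∑ β ∈ R, x β :=
  exists_recoverable_outside_info_general r m t C hC E hEne hE
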